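/- arXiv:2410.04948 — 4 statements merged into one kernel-verified Lean document; each statement's English description precedes it below -/
import Mathlib

section
/- If a measurable set X of finite positive measure tiles a locally compact abelian group E by translations (i.e., there is a translation set Λ with 1_X ∗ 1_Λ = 1_E almost everywhere), then X tiles its complement weakly: there exists a locally finite Borel measure μ with 1_X ∗ μ = 1_{E \ X} almost everywhere. -/
/-!
Distinct translates `X + l`, `l ∈ Λ`, are a.e. disjoint. Some translate meets a relatively
compact open set in positive measure, and moving that piece by the elements of `Λ ∩ K`
gives a.e. disjoint sets of equal positive measure inside a compact set, so `Λ ∩ K` is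
finite for every compact `K`. Hence, for a fixed `l₀ ∈ Λ`, the measure
`μ = ∑_{l ∈ Λ \ {l₀}} δ_{l - l₀}` is locally finite, and `1_X ∗ μ` is the tiling identity
`∑_{l ∈ Λ} 1_X(· + l₀ - l) = 1` with the term `l = l₀`, namely `1_X`, removed.
-/

open MeasureTheory Pointwise

theorem exists_measure_inter_ne_zero_of_ae_mem_biUnion {α ι : Type*} [MeasurableSpace α]
    {μ : Measure α} {s : Set ι} (hs : s.Countable) {A : ι → Set α}
    (hA : ∀ᵐ x ∂μ, ∃ i ∈ s, x ∈ A i) {U : Set α} (hU : μ U ≠ 0) :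
    ∃ i ∈ s, μ (U ∩ A i) ≠ 0 := by
  by_contra! h
  refine hU (measure_mono_null_ae ?_ ((measure_biUnion_null_iff hs).2 h))
  filter_upwards [hA] with x ⟨i, hi, hxi⟩ hxU
  exact Set.mem_biUnion hi ⟨hxU, hxi⟩

theorem isLocallyFiniteMeasure_sum_dirac {E ι : Type*} [TopologicalSpace E]
    [WeaklyLocallyCompactSpace E] [MeasurableSpace E] [OpensMeasurableSpace E] [Countable ι]
    {a : ι → E} (ha : ∀ K, IsCompact K → (a ⁻¹' K).Finite) :
    IsLocallyFiniteMeasure (Measure.sum fun i => Measure.dirac (a i)) := by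
  refine ⟨fun x => ?_⟩
  obtain ⟨K, hK, hxK⟩ := exists_compact_mem_nhds x
  have hint : MeasurableSet (interior K) := isOpen_interior.measurableSet
  refine ⟨interior K, interior_mem_nhds.2 hxK, ?_⟩
  calc (Measure.sum fun i => Measure.dirac (a i)) (interior K)
      = ∑' i, (a ⁻¹' interior K).indicator (fun _ => (1 : ENNReal)) i := by
        simp only [Measure.sum_apply _ hint, Measure.dirac_apply' _ hint]
        rfl
    _ = ENat.card (a ⁻¹' interior K) * 1 := by rw [← tsum_subtype, ENNReal.tsum_const]
    _ < ⊤ := by simpa using (ha K hK).subset (Set.preimage_mono interior_subset)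

section Tiling

variable {E : Type*} [AddCommGroup E] {X Λ : Set E}

theorem tsum_indicator_sub_diff_singleton {z l₀ : E} (hz : ∃! l, l ∈ Λ ∧ z - l ∈ X)
    (hl₀ : l₀ ∈ Λ) :
    ∑' l : ↥(Λ \ {l₀}), X.indicator (fun _ => (1 : ENNReal)) (z - l)
      = Xᶜ.indicator (fun _ => 1) (z - l₀) := by
  obtain ⟨l₁, ⟨hl₁, hzl₁⟩, huniq⟩ := hz
  by_cases h : l₁ = l₀
  · subst h
    rw [Set.indicator_of_notMem (Set.notMem_compl_iff.2 hzl₁), ENNReal.tsum_eq_zero]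
    exact fun l => Set.indicator_of_notMem (fun hl => l.2.2 (huniq _ ⟨l.2.1, hl⟩)) _
  · rw [Set.indicator_of_mem (s := Xᶜ) (fun hzl₀ => h (huniq _ ⟨hl₀, hzl₀⟩).symm),
      tsum_eq_single ⟨l₁, hl₁, h⟩ fun l hl => Set.indicator_of_notMem
        (fun hzl => hl (Subtype.ext (huniq _ ⟨l.2.1, hzl⟩))) _]
    exact Set.indicator_of_mem hzl₁ _

variable [MeasurableSpace E] {ν : Measure E}

theorem aedisjoint_of_ae_existsUnique (htile : ∀ᵐ x ∂ν, ∃! l, l ∈ Λ ∧ x - l ∈ X)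
    {l l' : E} (hl : l ∈ Λ) (hl' : l' ∈ Λ) (hne : l ≠ l') :
    AEDisjoint ν {x | x - l ∈ X} {x | x - l' ∈ X} := by
  refine measure_mono_null (fun x ⟨hxl, hxl'⟩ => ?_) (ae_iff.1 htile)
  exact fun hx => hne (hx.unique ⟨hl, hxl⟩ ⟨hl', hxl'⟩)

variable [TopologicalSpace E] [IsTopologicalAddGroup E] [LocallyCompactSpace E] [BorelSpace E]
  [ν.IsAddHaarMeasure]

theorem finite_inter_of_ae_existsUnique (hX : MeasurableSet X) (hΛ : Λ.Countable)
    (htile : ∀ᵐ x ∂ν, ∃! l, l ∈ Λ ∧ x - l ∈ X) {K : Set E} (hK : IsCompact K) :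
    (Λ ∩ K).Finite := by
  obtain ⟨V, hV, hV0⟩ := exists_compact_mem_nhds (0 : E)
  obtain ⟨l₁, -, hB⟩ := exists_measure_inter_ne_zero_of_ae_mem_biUnion hΛ
    (A := fun l => {x | x - l ∈ X}) (htile.mono fun _ hx => hx.exists)
    (isOpen_interior.measure_ne_zero ν ⟨0, mem_interior_iff_mem_nhds.2 hV0⟩)
  set B := interior V ∩ {x | x - l₁ ∈ X}
  let A : ↥(Λ ∩ K) → Set E := fun l => (· + (l₁ - l)) ⁻¹' B
  have hAν (l) : ν (A l) = ν B := measure_preimage_add_right ν _ B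
  have hAX (l : ↥(Λ ∩ K)) : A l ⊆ {x | x - l ∈ X} := fun x hx => by
    simpa [B, sub_eq_add_neg, add_assoc] using hx.2
  have hAmeas (l) : NullMeasurableSet (A l) ν :=
    (measurable_add_const _ (isOpen_interior.measurableSet.inter
      (measurable_sub_const l₁ hX))).nullMeasurableSet
  have hAdisj : Pairwise (Function.onFun (AEDisjoint ν) A) := fun l l' hne =>
    (aedisjoint_of_ae_existsUnique htile l.2.1 l'.2.1 (Subtype.coe_injective.ne hne)).mono
      (hAX l) (hAX l')
  have hAsub : ⋃ l, A l ⊆ (· + l₁) ⁻¹' (V + K) := Set.iUnion_subset fun l x hx =>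
    ⟨x + (l₁ - l), interior_subset hx.1, l, l.2.2, by simp only [add_assoc, sub_add_cancel]⟩
  have hAfin : ν (⋃ l, A l) ≠ ⊤ := ne_top_of_le_ne_top
    (by rw [measure_preimage_add_right]; exact (hV.add hK).measure_ne_top) (measure_mono hAsub)
  have hΛK := Measure.finite_const_le_meas_of_disjoint_iUnion₀ ν (pos_iff_ne_zero.2 hB) hAmeas
    hAdisj hAfin
  simp only [hAν, le_refl, Set.ofPred_true, Set.finite_univ_iff] at hΛK
  exact Set.finite_coe_iff.1 hΛK

end Tiling

theorem spectral_weak_tiling_of_tiling_general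
    {E : Type*} [AddCommGroup E] [TopologicalSpace E] [IsTopologicalAddGroup E]
    [LocallyCompactSpace E] [MeasurableSpace E] [BorelSpace E]
    (ν : Measure E) [ν.IsAddHaarMeasure]
    (X : Set E) (hXmeas : MeasurableSet X)
    (Λ : Set E) (hΛ : Λ.Countable)
    (htile : ∀ᵐ x ∂ν, ∃! l, l ∈ Λ ∧ x - l ∈ X) :
    ∃ μ : Measure E, IsLocallyFiniteMeasure μ ∧
      ∀ᵐ x ∂ν, (∫⁻ y, X.indicator (fun _ => (1 : ENNReal)) (x - y) ∂μ)
        = Xᶜ.indicator (fun _ => (1 : ENNReal)) x := by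
  have : (ae ν).NeBot := ae_neBot.2 (NeZero.ne ν)
  obtain ⟨-, l₀, ⟨hl₀, -⟩, -⟩ := htile.exists
  have : Countable ↥(Λ \ {l₀}) := (hΛ.mono Set.sdiff_subset).to_subtype
  refine ⟨Measure.sum fun l : ↥(Λ \ {l₀}) => Measure.dirac ((l : E) - l₀), ?_, ?_⟩
  · refine isLocallyFiniteMeasure_sum_dirac fun K hK => ?_
    have hfin := finite_inter_of_ae_existsUnique hXmeas hΛ htile
      ((Homeomorph.subRight l₀).isCompact_preimage.2 hK)
    exact (hfin.preimage Subtype.val_injective.injOn).subset fun l hl => ⟨l.2.1, hl⟩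
  · filter_upwards [(measurePreserving_add_right ν l₀).quasiMeasurePreserving.ae htile]
      with x hx
    have hmeas : Measurable fun y => X.indicator (fun _ => (1 : ENNReal)) (x - y) :=
      (measurable_const.indicator hXmeas).comp (measurable_const_sub x)
    simp only [lintegral_sum_measure, lintegral_dirac' _ hmeas, sub_sub_eq_add_sub]
    simpa using tsum_indicator_sub_diff_singleton hx hl₀

/-- If a measurable set `X` of finite positive Haar measure tiles a locally compact
abelian group `E` by translations (a.e. every point is covered by exactly one translate
`X + λ`, `λ ∈ Λ`), then `X` tiles its complement weakly: there exists a locally finite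
Borel measure `μ` with `1_X ∗ μ = 1_{E \ X}` almost everywhere. -/
theorem spectral_weak_tiling_of_tiling
    {E : Type*} [AddCommGroup E] [TopologicalSpace E] [IsTopologicalAddGroup E]
    [LocallyCompactSpace E] [MeasurableSpace E] [BorelSpace E]
    (ν : Measure E) [ν.IsAddHaarMeasure]
    (X : Set E) (hXmeas : MeasurableSet X) (hpos : 0 < ν X) (hfin : ν X < ⊤)
    (Λ : Set E) (hΛ : Λ.Countable)
    (htile : ∀ᵐ x ∂ν, ∃! l, l ∈ Λ ∧ x - l ∈ X) :
    ∃ μ : Measure E, IsLocallyFiniteMeasure μ ∧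
      ∀ᵐ x ∂ν, (∫⁻ y, X.indicator (fun _ => (1 : ENNReal)) (x - y) ∂μ)
        = Xᶜ.indicator (fun _ => (1 : ENNReal)) x :=
  spectral_weak_tiling_of_tiling_general ν X hXmeas Λ hΛ htile
end

section
/- In a finite abelian group E, if a subset X pd-tiles E (i.e., there exists a nonnegative function h: E → ℝ with h(0) = 1, 1_X ∗ h = 1_E, and the Fourier transform of h is nonnegative), then X weakly tiles its complement E \ X, i.e., 1_X ∗ (h − δ_0) = 1_{E \ X} with h − δ_0 nonnegative. -/
open scoped ComplexOrder

open Finset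

theorem sum_mul_ite_sub_eq_zero {G R : Type*} [AddGroup G] [Fintype G] [DecidableEq G]
    [NonAssocSemiring R] (f : G → R) (x : G) :
    ∑ y, f y * (if x - y = 0 then 1 else 0) = f x := by
  simp [sub_eq_zero]

theorem weak_tiling_of_pd_tiling_general
    {E : Type*} [AddCommGroup E] [Fintype E] [DecidableEq E]
    (X : Set E) (h : E → ℝ)
    (hnonneg : ∀ x, 0 ≤ h x) (h0 : h 0 = 1)
    (htile : ∀ x : E, ∑ y : E, X.indicator (fun _ => (1 : ℝ)) y * h (x - y) = 1) :
    (∀ x, 0 ≤ h x - (if x = 0 then (1 : ℝ) else 0)) ∧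
    (∀ x : E, ∑ y : E,
        X.indicator (fun _ => (1 : ℝ)) y * (h (x - y) - (if x - y = 0 then (1 : ℝ) else 0))
      = (Xᶜ).indicator (fun _ => (1 : ℝ)) x) := by
  refine ⟨fun x => ?_, fun x => ?_⟩
  · split_ifs with hx
    · simp [hx, h0]
    · simpa using hnonneg x
  · rw [Set.indicator_compl]
    simp only [mul_sub, sum_sub_distrib, htile x, sum_mul_ite_sub_eq_zero, Pi.sub_apply]

/-- In a finite abelian group `E`, if `X` pd-tiles `E` (there is `h ≥ 0` with
`h 0 = 1`, `1_X ∗ h = 1_E` and nonnegative Fourier transform), then `X` weakly tiles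
its complement: `1_X ∗ (h - δ₀) = 1_{E \ X}` and `h - δ₀` is nonnegative. -/
theorem weak_tiling_of_pd_tiling
    {E : Type*} [AddCommGroup E] [Fintype E] [DecidableEq E]
    (X : Set E) (h : E → ℝ)
    (hnonneg : ∀ x, 0 ≤ h x) (h0 : h 0 = 1)
    (htile : ∀ x : E, ∑ y : E, X.indicator (fun _ => (1 : ℝ)) y * h (x - y) = 1)
    (hft : ∀ γ : AddChar E ℂ, 0 ≤ ∑ x : E, (h x : ℂ) * γ x) :
    (∀ x, 0 ≤ h x - (if x = 0 then (1 : ℝ) else 0)) ∧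
    (∀ x : E, ∑ y : E,
        X.indicator (fun _ => (1 : ℝ)) y * (h (x - y) - (if x - y = 0 then (1 : ℝ) else 0))
      = (Xᶜ).indicator (fun _ => (1 : ℝ)) x) :=
  weak_tiling_of_pd_tiling_general X h hnonneg h0 htile
end

section
/- Let G, H be finite abelian groups, A ⊆ G, B ⊆ H, and t: A → H any function. Define P_t = ∪_{a∈A} {a} × (t(a) + B) ⊆ G × H. If B does not tile H by translations, then P_t does not tile G × H by translations. -/
/-!
Cut a tiling of `G × H` by translates of `P_t` along the fibre `{0} × H`. A translate
`m + P_t` meets this fibre in `{0} × (m.2 + t (-m.1) + B)` when `-m.1 ∈ A`, and not at all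
otherwise, so the fibre is partitioned by translates of `B`: `B` tiles `H`.
-/

section

variable {G H : Type*} [AddCommGroup H]

def IsTiling {E : Type*} [AddGroup E] (X M : Set E) : Prop :=
  ∀ x : E, ∃! m, m ∈ M ∧ x - m ∈ X

theorem mem_iUnion_singleton_prod_image_add_iff (A : Set G) (B : Set H) (t : A → H)
    (g : G) (y : H) :
    (g, y) ∈ ⋃ a : A, {(a : G)} ×ˢ ((t a + ·) '' B) ↔ ∃ h : g ∈ A, y - t ⟨g, h⟩ ∈ B := by
  simp only [Set.mem_iUnion, Set.mem_prod, Set.mem_singleton_iff, Set.mem_image]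
  constructor
  · rintro ⟨a, rfl, b, hb, rfl⟩
    exact ⟨a.2, by simpa using hb⟩
  · rintro ⟨hg, hy⟩
    exact ⟨⟨g, hg⟩, rfl, _, hy, add_sub_cancel _ _⟩

theorem IsTiling.fiber [AddCommGroup G] {A : Set G} {B : Set H} {t : A → H} {M : Set (G × H)}
    (hM : IsTiling (⋃ a : A, {(a : G)} ×ˢ ((t a + ·) '' B)) M) (g : G) :
    IsTiling B {y | ∃ m ∈ M, ∃ h : g - m.1 ∈ A, y = m.2 + t ⟨_, h⟩} := by
  have mem_iff (x : H) (m : G × H) :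
      (g, x) - m ∈ ⋃ a : A, {(a : G)} ×ˢ ((t a + ·) '' B) ↔
        ∃ h : g - m.1 ∈ A, x - (m.2 + t ⟨_, h⟩) ∈ B := by
    rw [show (g, x) - m = (g - m.1, x - m.2) from rfl, mem_iUnion_singleton_prod_image_add_iff]
    simp only [sub_add_eq_sub_sub]
  intro x
  obtain ⟨m, ⟨hmM, hm⟩, huniq⟩ := hM (g, x)
  obtain ⟨hA, hx⟩ := (mem_iff x m).1 hm
  refine ⟨_, ⟨⟨m, hmM, hA, rfl⟩, hx⟩, ?_⟩
  rintro _ ⟨⟨n, hnM, hn, rfl⟩, hy⟩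
  obtain rfl : n = m := huniq n ⟨hnM, (mem_iff x n).2 ⟨hn, hy⟩⟩
  rfl

end

theorem Pt_not_tile_general
    {G H : Type*} [AddCommGroup G] [AddCommGroup H]
    (A : Set G) (B : Set H) (t : A → H)
    (hB : ¬ ∃ M : Set H, ∀ x : H, ∃! m, m ∈ M ∧ x - m ∈ B) :
    ¬ ∃ M : Set (G × H), ∀ z : G × H, ∃! m, m ∈ M ∧
        z - m ∈ ⋃ a : A, {(a : G)} ×ˢ ((t a + ·) '' B) := by
  rintro ⟨M, hM⟩
  exact hB ⟨_, IsTiling.fiber hM 0⟩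

/-- If `B` does not tile the finite abelian group `H` by translations, then for any
`A ⊆ G` and any `t : A → H`, the set `P_t = ⋃_{a ∈ A} {a} × (t a + B)` does not tile
`G × H` by translations. -/
theorem Pt_not_tile
    {G H : Type*} [AddCommGroup G] [AddCommGroup H] [Fintype G] [Fintype H]
    (A : Set G) (B : Set H) (t : A → H)
    (hB : ¬ ∃ M : Set H, ∀ x : H, ∃! m, m ∈ M ∧ x - m ∈ B) :
    ¬ ∃ M : Set (G × H), ∀ z : G × H, ∃! m, m ∈ M ∧
        z - m ∈ ⋃ a : A, {(a : G)} ×ˢ ((t a + ·) '' B) :=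
  Pt_not_tile_general A B t hB
end

section
/- Let H be a finite abelian group and let B ⊆ H be spectral with spectrum S_B. Then B pd-tiles H; i.e., there exists h: H → ℝ with h ≥ 0, h(0) = 1, ĥ ≥ 0, and 1_B ∗ h = 1_H. -/
open scoped ComplexOrder

private lemma char_mul_conj_self {H : Type*} [AddCommGroup H] [Fintype H]
    (ρ : AddChar H ℂ) (y : H) : ρ y * starRingEnd ℂ (ρ y) = 1 := by
  rw [← AddChar.inv_apply_eq_conj]
  exact mul_inv_cancel₀ (by
    intro h
    have := AddChar.norm_apply ρ y
    rw [h] at this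
    simp at this)

private lemma char_triple_sum_nonneg {H : Type*} [AddCommGroup H] [Fintype H]
    (ρ ρ' γ : AddChar H ℂ) :
    0 ≤ ∑ x : H, ρ x * starRingEnd ℂ (ρ' x) * γ x := by
  set F : H → ℂ := fun x => ρ x * starRingEnd ℂ (ρ' x) * γ x with hF
  have hmul : ∀ a x, F (a + x) = F a * F x := by
    intro a x
    simp only [hF, AddChar.map_add_eq_mul, map_mul]
    ring
  by_cases hall : ∀ x, F x = 1
  · have : ∑ x : H, F x = (Fintype.card H : ℂ) := by simp [hall]
    rw [show ∑ x : H, ρ x * starRingEnd ℂ (ρ' x) * γ x = ∑ x : H, F x from rfl, this]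
    exact_mod_cast Nat.cast_nonneg' (Fintype.card H)
  · push_neg at hall
    obtain ⟨a, ha⟩ := hall
    have hT : F a * ∑ x : H, F x = ∑ x : H, F x := by
      rw [Finset.mul_sum]
      simp_rw [← hmul]
      exact Fintype.sum_equiv (Equiv.addLeft a) _ _ (fun x => rfl)
    have h2 : (F a - 1) * ∑ x : H, F x = 0 := by rw [sub_mul, one_mul, hT, sub_self]
    have h0 : ∑ x : H, F x = 0 := by
      rcases mul_eq_zero.mp h2 with h | h
      · exact absurd (by linear_combination h) ha
      · exact h
    rw [show ∑ x : H, ρ x * starRingEnd ℂ (ρ' x) * γ x = ∑ x : H, F x from rfl, h0]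

/-- If `B ⊆ H` is spectral (there is a set of `|B|` characters of `H` pairwise
orthogonal on `B`), then `B` pd-tiles `H`: there exists `h : H → ℝ` with `h ≥ 0`,
`h 0 = 1`, nonnegative Fourier transform, and `1_B ∗ h = 1_H`. -/
theorem pd_tiles_of_spectral
    {H : Type*} [AddCommGroup H] [Fintype H] [DecidableEq H]
    (B : Finset H) (hBne : B.Nonempty)
    (hspec : ∃ S : Finset (AddChar H ℂ), S.card = B.card ∧
      ∀ ρ₁ ∈ S, ∀ ρ₂ ∈ S, ρ₁ ≠ ρ₂ → ∑ b ∈ B, ρ₁ b * starRingEnd ℂ (ρ₂ b) = 0) :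
    ∃ h : H → ℝ,
      (∀ x, 0 ≤ h x) ∧
      h 0 = 1 ∧
      (∀ γ : AddChar H ℂ, 0 ≤ ∑ x : H, (h x : ℂ) * γ x) ∧
      (∀ x : H, ∑ y : H, (if y ∈ B then (1 : ℝ) else 0) * h (x - y) = 1) := by
  classical
  obtain ⟨S, hcard, horth⟩ := hspec
  have hB0 : (0 : ℝ) < (B.card : ℝ) := by exact_mod_cast hBne.card_pos
  set g : H → ℂ := fun x => ∑ ρ ∈ S, ρ x with hg
  refine ⟨fun x => Complex.normSq (g x) / (B.card : ℝ)^2, ?_, ?_, ?_, ?_⟩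
  · intro x
    exact div_nonneg (Complex.normSq_nonneg _) (by positivity)
  · have hg0 : g 0 = (B.card : ℂ) := by simp [hg, hcard]
    simp only [hg0, Complex.normSq_natCast]
    field_simp
  · intro γ
    have hcast : ∀ x, ((Complex.normSq (g x) / (B.card : ℝ)^2 : ℝ) : ℂ)
        = (((((B.card : ℝ)^2)⁻¹ : ℝ)) : ℂ) * (g x * starRingEnd ℂ (g x)) := by
      intro x
      rw [Complex.mul_conj]
      push_cast
      ring
    have key : 0 ≤ ∑ x : H, g x * starRingEnd ℂ (g x) * γ x := by
      have expand : ∀ x : H, g x * starRingEnd ℂ (g x) * γ x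
          = ∑ ρ ∈ S, ∑ ρ' ∈ S, ρ x * starRingEnd ℂ (ρ' x) * γ x := by
        intro x
        simp only [hg, map_sum, Finset.sum_mul, Finset.mul_sum]
        exact Finset.sum_comm
      simp_rw [expand]
      rw [Finset.sum_comm]
      refine Finset.sum_nonneg fun ρ _ => ?_
      rw [Finset.sum_comm]
      exact Finset.sum_nonneg fun ρ' _ => char_triple_sum_nonneg ρ ρ' γ
    calc (0:ℂ) ≤ (((((B.card : ℝ)^2)⁻¹ : ℝ)) : ℂ) * ∑ x : H, g x * starRingEnd ℂ (g x) * γ x := by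
          refine mul_nonneg ?_ key
          rw [Complex.zero_le_real]
          positivity
      _ = ∑ x : H, ((Complex.normSq (g x) / (B.card : ℝ)^2 : ℝ) : ℂ) * γ x := by
          rw [Finset.mul_sum]
          refine Finset.sum_congr rfl fun x _ => ?_
          rw [hcast]
          ring
  · intro x
    simp only [ite_mul, one_mul, zero_mul]
    rw [Finset.sum_ite_mem, Finset.univ_inter]
    have main : ∑ y ∈ B, (Complex.normSq (g (x - y)) : ℂ) = ((B.card : ℂ))^2 := by
      have step1 : ∀ y : H, (Complex.normSq (g (x - y)) : ℂ)
          = ∑ ρ ∈ S, ∑ ρ' ∈ S, ρ (x - y) * starRingEnd ℂ (ρ' (x - y)) := by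
        intro y
        rw [← Complex.mul_conj]
        simp only [hg, map_sum, Finset.sum_mul, Finset.mul_sum]
        exact Finset.sum_comm
      have swap : ∑ y ∈ B, ∑ ρ ∈ S, ∑ ρ' ∈ S, ρ (x - y) * starRingEnd ℂ (ρ' (x - y))
          = ∑ ρ ∈ S, ∑ ρ' ∈ S, ∑ y ∈ B, ρ (x - y) * starRingEnd ℂ (ρ' (x - y)) := by
        rw [Finset.sum_comm]
        exact Finset.sum_congr rfl fun ρ _ => Finset.sum_comm
      simp_rw [step1]
      rw [swap]
      have step2 : ∀ ρ ∈ S, ∑ ρ' ∈ S, ∑ y ∈ B, ρ (x - y) * starRingEnd ℂ (ρ' (x - y))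
          = (B.card : ℂ) := by
        intro ρ hρ
        have inner : ∀ ρ' : AddChar H ℂ, ∑ y ∈ B, ρ (x - y) * starRingEnd ℂ (ρ' (x - y))
            = ρ x * starRingEnd ℂ (ρ' x) * starRingEnd ℂ (∑ y ∈ B, ρ y * starRingEnd ℂ (ρ' y)) := by
          intro ρ'
          rw [map_sum, Finset.mul_sum]
          refine Finset.sum_congr rfl fun y _ => ?_
          simp only [sub_eq_add_neg, AddChar.map_add_eq_mul, AddChar.map_neg_eq_conj, map_mul,
            Complex.conj_conj]
          ring
        rw [Finset.sum_eq_single ρ]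
        · rw [inner ρ]
          have hs : ∑ y ∈ B, ρ y * starRingEnd ℂ (ρ y) = (B.card : ℂ) := by
            simp [char_mul_conj_self]
          rw [hs, char_mul_conj_self]
          simp [Complex.conj_natCast]
        · intro ρ' hρ' hne
          rw [inner ρ', horth ρ hρ ρ' hρ' (Ne.symm hne)]
          simp
        · intro h; exact absurd hρ h
      rw [Finset.sum_congr rfl step2, Finset.sum_const, hcard, nsmul_eq_mul, sq]
    have mainR : ∑ y ∈ B, Complex.normSq (g (x - y)) = (B.card : ℝ)^2 := by
      exact_mod_cast main
    rw [← Finset.sum_div, mainR, div_self (by positivity)]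
end
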